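/- The single-logarithmic periods satisfy the symmetric second-order Picard–Fuchs relations of the unequal-mass three-loop banana integral: for each j ∈ {1,2,3,4}, define φ_j(y) = Σ_{n∈ℕ⁴} a_{n,j} y^n + ψ₀(y) · log(y_j) for y in the open box (0, 1/16)⁴ ⊂ ℝ⁴. Then for all y ∈ (0, 1/16)⁴ and all i, k ∈ {1,2,3,4}, one has y_i ∂²φ_j/∂y_i² + ∂φ_j/∂y_i = y_k ∂²φ_j/∂y_k² + ∂φ_j/∂y_k. -/

import Mathlib

/-- The Taylor coefficients `a_n = (-1)^|n| (|n|! / (n₁! n₂! n₃! n₄!))²` of the holomorphic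
period of the K3 family of the unequal-mass three-loop banana integral. -/
noncomputable def bananaA (n : Fin 4 → ℕ) : ℝ :=
  (-1) ^ (∑ i, n i) *
    ((Nat.factorial (∑ i, n i) : ℝ) / ∏ i, (Nat.factorial (n i) : ℝ)) ^ 2

/-- The harmonic number `S₁(n) = ∑_{k=1}^n 1/k`, with `S₁(0) = 0`. -/
noncomputable def harmonicS1 (n : ℕ) : ℝ := ∑ k ∈ Finset.range n, (1 : ℝ) / (k + 1)

/-- The coefficients `a_{n,j} = 2 a_n (S₁(|n|) - S₁(n_j))` of the single-logarithmic
Frobenius periods. -/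
noncomputable def bananaAlog (n : Fin 4 → ℕ) (j : Fin 4) : ℝ :=
  2 * bananaA n * (harmonicS1 (∑ i, n i) - harmonicS1 (n j))

/-- The holomorphic period `ψ₀(y) = ∑_{n∈ℕ⁴} a_n y^n`. -/
noncomputable def psi0 (y : Fin 4 → ℝ) : ℝ :=
  ∑' n : Fin 4 → ℕ, bananaA n * ∏ i, y i ^ n i

/-- The single-logarithmic period
`φ_j(y) = ∑_{n∈ℕ⁴} a_{n,j} y^n + ψ₀(y) log(y_j)` (up to the prefactor `2πi`,
this is the Frobenius period `ψ_{1,j}`). -/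
noncomputable def phi1 (j : Fin 4) (y : Fin 4 → ℝ) : ℝ :=
  (∑' n : Fin 4 → ℕ, bananaAlog n j * ∏ i, y i ^ n i) + psi0 y * Real.log (y j)

/-- The partial derivative `∂f/∂yᵢ` of a function of four real variables. -/
noncomputable def pderiv (i : Fin 4) (f : (Fin 4 → ℝ) → ℝ) (y : Fin 4 → ℝ) : ℝ :=
  deriv (fun t => f (Function.update y i t)) (y i)

namespace BananaAux

open Finset Function

abbrev Coef := (Fin 4 → ℕ) → ℝ

noncomputable def mono (y : Fin 4 → ℝ) (n : Fin 4 → ℕ) : ℝ := ∏ l, y l ^ n l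

def deg (n : Fin 4 → ℕ) : ℕ := ∑ l, n l

noncomputable def S (c : Coef) (y : Fin 4 → ℝ) : ℝ := ∑' n, c n * mono y n

def shf (i : Fin 4) (n : Fin 4 → ℕ) : Fin 4 → ℕ := Function.update n i (n i + 1)

noncomputable def Dc (i : Fin 4) (c : Coef) : Coef := fun n => ((n i : ℝ) + 1) * c (shf i n)

noncomputable def Ec (i : Fin 4) (c : Coef) : Coef := fun n => ((n i : ℝ) + 1) ^ 2 * c (shf i n)

def Adm (d : ℕ) (c : Coef) : Prop :=
  ∃ C : ℝ, 0 ≤ C ∧ ∀ n, |c n| ≤ C * ((deg n : ℝ) + 1) ^ d * 16 ^ (deg n)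

lemma shf_self (i : Fin 4) (n : Fin 4 → ℕ) : shf i n i = n i + 1 := Function.update_self ..

lemma shf_ne {l i : Fin 4} (n : Fin 4 → ℕ) (h : l ≠ i) : shf i n l = n l :=
  Function.update_of_ne h _ _

lemma deg_shf (i : Fin 4) (n : Fin 4 → ℕ) : deg (shf i n) = deg n + 1 := by
  unfold deg shf
  rw [Finset.sum_update_of_mem (Finset.mem_univ i), ← Finset.add_sum_erase _ _ (Finset.mem_univ i),
    Finset.erase_eq]
  omega

lemma shf_inj (i : Fin 4) : Function.Injective (shf i) := by
  intro a b hab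
  funext l
  by_cases hl : l = i
  · subst hl
    have := congrFun hab l
    rw [shf_self, shf_self] at this
    omega
  · have := congrFun hab l
    rwa [shf_ne _ hl, shf_ne _ hl] at this

lemma update_shf_pred (i : Fin 4) (n : Fin 4 → ℕ) :
    Function.update (shf i n) i (n i) = n := by
  unfold shf
  rw [Function.update_idem, Function.update_eq_self]

lemma prod_factorial_shf (i : Fin 4) (n : Fin 4 → ℕ) :
    ∏ l, Nat.factorial (shf i n l) = (n i + 1) * ∏ l, Nat.factorial (n l) := by
  rw [← Finset.mul_prod_erase Finset.univ (fun l => Nat.factorial (shf i n l)) (Finset.mem_univ i),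
    ← Finset.mul_prod_erase Finset.univ (fun l => Nat.factorial (n l)) (Finset.mem_univ i),
    shf_self, Nat.factorial_succ]
  rw [Finset.prod_congr rfl fun l hl => by
    rw [shf_ne _ (Finset.mem_erase.1 hl).1]]
  ring

noncomputable def Rest (i : Fin 4) (y : Fin 4 → ℝ) (n : Fin 4 → ℕ) : ℝ :=
  ∏ l ∈ Finset.univ.erase i, y l ^ n l

lemma mono_update (y : Fin 4 → ℝ) (i : Fin 4) (t : ℝ) (n : Fin 4 → ℕ) :
    mono (Function.update y i t) n = t ^ n i * Rest i y n := by
  unfold mono Rest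
  rw [← Finset.mul_prod_erase Finset.univ (fun l => Function.update y i t l ^ n l)
    (Finset.mem_univ i), Function.update_self]
  congr 1
  exact Finset.prod_congr rfl fun l hl => by
    rw [Function.update_of_ne (Finset.mem_erase.1 hl).1]

lemma mono_eq (y : Fin 4 → ℝ) (i : Fin 4) (n : Fin 4 → ℕ) :
    mono y n = y i ^ n i * Rest i y n := by
  have := mono_update y i (y i) n
  rwa [Function.update_eq_self] at this

lemma Rest_shf (i : Fin 4) (y : Fin 4 → ℝ) (n : Fin 4 → ℕ) :
    Rest i y (shf i n) = Rest i y n :=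
  Finset.prod_congr rfl fun l hl => by rw [shf_ne _ (Finset.mem_erase.1 hl).1]

lemma mono_shf (y : Fin 4 → ℝ) (i : Fin 4) (n : Fin 4 → ℕ) :
    mono y (shf i n) = y i * mono y n := by
  rw [mono_eq y i (shf i n), mono_eq y i n, Rest_shf, shf_self, pow_succ]
  ring


lemma one_var_summable (d : ℕ) {q : ℝ} (h0 : 0 < q) (h1 : q < 1) :
    Summable (fun m : ℕ => ((m : ℝ) + 1) ^ d * q ^ m) := by
  have h : Summable (fun m : ℕ => (m : ℝ) ^ d * q ^ m) :=
    summable_pow_mul_geometric_of_norm_lt_one d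
      (by rw [Real.norm_eq_abs, abs_of_nonneg h0.le]; exact h1)
  have h2 : Summable (fun m : ℕ => ((m + 1 : ℕ) : ℝ) ^ d * q ^ (m + 1)) :=
    h.comp_injective (add_left_injective 1)
  have h3 := h2.mul_left q⁻¹
  refine h3.congr fun m => ?_
  push_cast
  field_simp
  ring

def e4 : (ℕ × ℕ × ℕ × ℕ) ≃ (Fin 4 → ℕ) where
  toFun p := ![p.1, p.2.1, p.2.2.1, p.2.2.2]
  invFun n := (n 0, n 1, n 2, n 3)
  left_inv p := rfl
  right_inv n := by
    funext l
    fin_cases l <;> rfl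

set_option maxHeartbeats 1000000 in
lemma prod_summable {g : ℕ → ℝ} (hg : Summable g) (h0 : ∀ m, 0 ≤ g m) :
    Summable (fun n : Fin 4 → ℕ => ∏ l, g (n l)) := by
  have h2 : Summable (fun p : ℕ × ℕ => g p.1 * g p.2) :=
    hg.mul_of_nonneg hg h0 h0
  have h3 : Summable (fun p : ℕ × ℕ × ℕ => g p.1 * (g p.2.1 * g p.2.2)) :=
    hg.mul_of_nonneg h2 h0 (fun p => mul_nonneg (h0 _) (h0 _))
  have h4 : Summable (fun p : ℕ × ℕ × ℕ × ℕ => g p.1 * (g p.2.1 * (g p.2.2.1 * g p.2.2.2))) :=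
    hg.mul_of_nonneg h3 h0 (fun p => mul_nonneg (h0 _) (mul_nonneg (h0 _) (h0 _)))
  apply (Equiv.summable_iff e4).mp
  refine h4.congr fun p => ?_
  change g p.1 * (g p.2.1 * (g p.2.2.1 * g p.2.2.2)) = ∏ l, g (![p.1, p.2.1, p.2.2.1, p.2.2.2] l)
  simp only [Function.comp, e4, Equiv.coe_fn_mk, Fin.prod_univ_four, Matrix.cons_val_zero,
    Matrix.cons_val_one, Matrix.head_cons, Matrix.cons_val_two, Matrix.tail_cons,
    Matrix.cons_val_three]
  ring

lemma sum_one_le_prod (n : Fin 4 → ℕ) :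
    ((deg n : ℝ) + 1) ≤ ∏ l, ((n l : ℝ) + 1) := by
  have h0 : ∀ l : Fin 4, (0 : ℝ) ≤ (n l : ℝ) := fun l => Nat.cast_nonneg _
  unfold deg
  rw [Fin.sum_univ_four, Fin.prod_univ_four]
  push_cast
  nlinarith [h0 0, h0 1, h0 2, h0 3, mul_nonneg (h0 0) (h0 1), mul_nonneg (h0 2) (h0 3),
    mul_nonneg (mul_nonneg (h0 0) (h0 1)) (h0 2),
    mul_nonneg (mul_nonneg (h0 0) (h0 1)) (h0 3),
    mul_nonneg (mul_nonneg (h0 0) (h0 2)) (h0 3),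
    mul_nonneg (mul_nonneg (h0 1) (h0 2)) (h0 3),
    mul_nonneg (mul_nonneg (mul_nonneg (h0 0) (h0 1)) (h0 2)) (h0 3)]

lemma summable_base (d : ℕ) {q : ℝ} (h0 : 0 < q) (h1 : q < 1) :
    Summable (fun n : Fin 4 → ℕ => ((deg n : ℝ) + 1) ^ d * q ^ (deg n)) := by
  have hg : Summable (fun m : ℕ => ((m : ℝ) + 1) ^ d * q ^ m) := one_var_summable d h0 h1
  have hg0 : ∀ m : ℕ, 0 ≤ ((m : ℝ) + 1) ^ d * q ^ m := fun m =>
    mul_nonneg (pow_nonneg (by positivity) _) (pow_nonneg h0.le _)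
  refine Summable.of_nonneg_of_le (fun n => ?_) (fun n => ?_) (prod_summable hg hg0)
  · positivity
  · have key : ∏ l, (((n l : ℝ) + 1) ^ d * q ^ (n l))
        = (∏ l, ((n l : ℝ) + 1)) ^ d * q ^ (deg n) := by
      unfold deg
      rw [Finset.prod_mul_distrib, ← Finset.prod_pow_eq_pow_sum, Finset.prod_pow]
    rw [key]
    apply mul_le_mul_of_nonneg_right _ (pow_nonneg h0.le _)
    exact pow_le_pow_left₀ (by positivity) (sum_one_le_prod n) d

lemma key_summable {C q : ℝ} {d : ℕ} {f : (Fin 4 → ℕ) → ℝ} (h0 : 0 < q) (h1 : q < 1)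
    (hf : ∀ n, |f n| ≤ C * ((deg n : ℝ) + 1) ^ d * q ^ (deg n)) : Summable f := by
  refine Summable.of_norm_bounded ((summable_base d h0 h1).mul_left C) (fun n => ?_)
  rw [Real.norm_eq_abs]
  calc |f n| ≤ C * ((deg n : ℝ) + 1) ^ d * q ^ (deg n) := hf n
    _ = C * (((deg n : ℝ) + 1) ^ d * q ^ (deg n)) := by ring



/-! ### Admissibility -/

lemma Adm.dc {d : ℕ} {c : Coef} (hc : Adm d c) (i : Fin 4) : Adm (d + 1) (Dc i c) := by
  obtain ⟨C, hC0, hC⟩ := hc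
  refine ⟨16 * 2 ^ d * C, by positivity, fun n => ?_⟩
  have hni : (n i : ℝ) ≤ (deg n : ℝ) := by
    exact_mod_cast Finset.single_le_sum (f := n) (fun _ _ => Nat.zero_le _) (Finset.mem_univ i)
  have h2 : |c (shf i n)| ≤ C * (((deg n : ℝ)) + 2) ^ d * (16 * 16 ^ (deg n)) := by
    have := hC (shf i n)
    rw [deg_shf] at this
    push_cast at this
    calc |c (shf i n)| ≤ C * ((deg n : ℝ) + 1 + 1) ^ d * 16 ^ (deg n + 1) := this
      _ = C * ((deg n : ℝ) + 2) ^ d * (16 * 16 ^ (deg n)) := by rw [pow_succ]; ring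
  have hstep : ((deg n : ℝ) + 2) ^ d ≤ 2 ^ d * ((deg n : ℝ) + 1) ^ d := by
    rw [← mul_pow]
    exact pow_le_pow_left₀ (by positivity) (by linarith) d
  have habs : |Dc i c n| = ((n i : ℝ) + 1) * |c (shf i n)| := by
    rw [Dc, abs_mul, abs_of_nonneg (by positivity)]
  calc |Dc i c n| = ((n i : ℝ) + 1) * |c (shf i n)| := habs
    _ ≤ ((deg n : ℝ) + 1) * (C * ((deg n : ℝ) + 2) ^ d * (16 * 16 ^ (deg n))) := by
        apply mul_le_mul (by linarith) h2 (abs_nonneg _) (by positivity)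
    _ ≤ ((deg n : ℝ) + 1) * (C * (2 ^ d * ((deg n : ℝ) + 1) ^ d) * (16 * 16 ^ (deg n))) := by
        exact mul_le_mul_of_nonneg_left (mul_le_mul_of_nonneg_right
          (mul_le_mul_of_nonneg_left hstep hC0) (by positivity)) (by positivity)
    _ = 16 * 2 ^ d * C * ((deg n : ℝ) + 1) ^ (d + 1) * 16 ^ (deg n) := by
        rw [pow_succ]; ring

lemma Adm.ec {d : ℕ} {c : Coef} (hc : Adm d c) (i : Fin 4) : Adm (d + 2) (Ec i c) := by
  obtain ⟨C, hC0, hC⟩ := hc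
  refine ⟨16 * 2 ^ d * C, by positivity, fun n => ?_⟩
  have hni : (n i : ℝ) ≤ (deg n : ℝ) := by
    exact_mod_cast Finset.single_le_sum (f := n) (fun _ _ => Nat.zero_le _) (Finset.mem_univ i)
  have h2 : |c (shf i n)| ≤ C * (((deg n : ℝ)) + 2) ^ d * (16 * 16 ^ (deg n)) := by
    have := hC (shf i n)
    rw [deg_shf] at this
    push_cast at this
    calc |c (shf i n)| ≤ C * ((deg n : ℝ) + 1 + 1) ^ d * 16 ^ (deg n + 1) := this
      _ = C * ((deg n : ℝ) + 2) ^ d * (16 * 16 ^ (deg n)) := by rw [pow_succ]; ring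
  have hstep : ((deg n : ℝ) + 2) ^ d ≤ 2 ^ d * ((deg n : ℝ) + 1) ^ d := by
    rw [← mul_pow]
    exact pow_le_pow_left₀ (by positivity) (by linarith) d
  have habs : |Ec i c n| = ((n i : ℝ) + 1) ^ 2 * |c (shf i n)| := by
    rw [Ec, abs_mul, abs_of_nonneg (by positivity)]
  have hsq : ((n i : ℝ) + 1) ^ 2 ≤ ((deg n : ℝ) + 1) ^ 2 :=
    pow_le_pow_left₀ (by positivity) (by linarith) 2
  calc |Ec i c n| = ((n i : ℝ) + 1) ^ 2 * |c (shf i n)| := habs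
    _ ≤ ((deg n : ℝ) + 1) ^ 2 * (C * ((deg n : ℝ) + 2) ^ d * (16 * 16 ^ (deg n))) := by
        apply mul_le_mul hsq h2 (abs_nonneg _) (by positivity)
    _ ≤ ((deg n : ℝ) + 1) ^ 2 * (C * (2 ^ d * ((deg n : ℝ) + 1) ^ d) * (16 * 16 ^ (deg n))) := by
        exact mul_le_mul_of_nonneg_left (mul_le_mul_of_nonneg_right
          (mul_le_mul_of_nonneg_left hstep hC0) (by positivity)) (by positivity)
    _ = 16 * 2 ^ d * C * ((deg n : ℝ) + 1) ^ (d + 2) * 16 ^ (deg n) := by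
        rw [show d + 2 = d + 1 + 1 from rfl, pow_succ, pow_succ]; ring

/-! ### Bounds on the banana coefficients -/

lemma multinomial_le_pow (n : Fin 4 → ℕ) : Nat.multinomial Finset.univ n ≤ 4 ^ deg n := by
  have h := Finset.sum_pow_eq_sum_piAntidiag (Finset.univ : Finset (Fin 4)) (fun _ => (1 : ℕ))
    (deg n)
  simp only [Finset.sum_const, Finset.card_univ, Fintype.card_fin, smul_eq_mul, mul_one, one_pow,
    Finset.prod_const_one] at h
  have hmem : n ∈ Finset.piAntidiag Finset.univ (deg n) := by
    rw [Finset.mem_piAntidiag]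
    exact ⟨rfl, fun i _ => Finset.mem_univ i⟩
  calc Nat.multinomial Finset.univ n
      ≤ ∑ k ∈ Finset.piAntidiag Finset.univ (deg n), Nat.multinomial Finset.univ k :=
        Finset.single_le_sum (fun _ _ => Nat.zero_le _) hmem
    _ = 4 ^ deg n := by exact_mod_cast h.symm

lemma factorial_ratio_eq (n : Fin 4 → ℕ) :
    ((deg n).factorial : ℝ) / ∏ l, ((n l).factorial : ℝ)
      = (Nat.multinomial Finset.univ n : ℝ) := by
  have h := Nat.multinomial_spec Finset.univ n
  have hpos : (0 : ℝ) < ∏ l, ((n l).factorial : ℝ) := by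
    apply Finset.prod_pos
    intro l _
    exact_mod_cast Nat.factorial_pos _
  rw [div_eq_iff (ne_of_gt hpos)]
  have := congrArg (fun m : ℕ => (m : ℝ)) h
  push_cast at this
  unfold deg
  rw [← this]
  ring

lemma abs_bananaA_le (n : Fin 4 → ℕ) : |bananaA n| ≤ 16 ^ deg n := by
  have hratio := factorial_ratio_eq n
  have hmul := multinomial_le_pow n
  have : bananaA n = (-1 : ℝ) ^ deg n * ((Nat.multinomial Finset.univ n : ℝ)) ^ 2 := by
    rw [bananaA, ← hratio]
    rfl
  rw [this, abs_mul, abs_pow, abs_neg, abs_one, one_pow, one_mul, abs_pow, abs_of_nonneg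
    (by positivity : (0:ℝ) ≤ (Nat.multinomial Finset.univ n : ℝ))]
  calc ((Nat.multinomial Finset.univ n : ℝ)) ^ 2 ≤ ((4 : ℝ) ^ deg n) ^ 2 := by
        apply pow_le_pow_left₀ (by positivity)
        exact_mod_cast hmul
    _ = 16 ^ deg n := by
        rw [← pow_mul, mul_comm, pow_mul]
        norm_num

lemma adm_c0 : Adm 0 bananaA := by
  refine ⟨1, zero_le_one, fun n => ?_⟩
  simpa using abs_bananaA_le n

lemma harmonic_nonneg (m : ℕ) : 0 ≤ harmonicS1 m :=
  Finset.sum_nonneg fun k _ => by positivity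

lemma harmonic_mono {m N : ℕ} (h : m ≤ N) : harmonicS1 m ≤ harmonicS1 N :=
  Finset.sum_le_sum_of_subset_of_nonneg (Finset.range_subset_range.2 h) fun k _ _ => by positivity

lemma harmonic_le (N : ℕ) : harmonicS1 N ≤ N := by
  calc harmonicS1 N ≤ ∑ _k ∈ Finset.range N, (1 : ℝ) := by
        apply Finset.sum_le_sum
        intro k _
        rw [div_le_one (by positivity)]
        linarith [Nat.cast_nonneg (α := ℝ) k]
    _ = N := by simp

lemma harmonic_succ (m : ℕ) : harmonicS1 (m + 1) = harmonicS1 m + 1 / ((m : ℝ) + 1) := by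
  rw [harmonicS1, Finset.sum_range_succ]
  rfl

lemma adm_c1 (j : Fin 4) : Adm 1 (fun n => bananaAlog n j) := by
  refine ⟨2, by norm_num, fun n => ?_⟩
  have hnj : n j ≤ deg n := Finset.single_le_sum (f := n) (fun _ _ => Nat.zero_le _)
    (Finset.mem_univ j)
  have hdiff : |harmonicS1 (deg n) - harmonicS1 (n j)| ≤ (deg n : ℝ) := by
    rw [abs_of_nonneg (by linarith [harmonic_mono hnj])]
    linarith [harmonic_le (deg n), harmonic_nonneg (n j)]
  have hlog : bananaAlog n j = 2 * bananaA n * (harmonicS1 (deg n) - harmonicS1 (n j)) := rfl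
  have : |bananaAlog n j| = 2 * |bananaA n| * |harmonicS1 (deg n) - harmonicS1 (n j)| := by
    rw [hlog, abs_mul, abs_mul, abs_two]
  rw [this]
  calc 2 * |bananaA n| * |harmonicS1 (deg n) - harmonicS1 (n j)|
      ≤ 2 * 16 ^ deg n * (deg n : ℝ) := by
        apply mul_le_mul _ hdiff (abs_nonneg _) (by positivity)
        have := abs_bananaA_le n
        nlinarith [abs_nonneg (bananaA n)]
    _ ≤ 2 * ((deg n : ℝ) + 1) ^ 1 * 16 ^ deg n := by
        rw [pow_one]
        nlinarith [pow_nonneg (by norm_num : (0:ℝ) ≤ 16) (deg n), Nat.cast_nonneg (α := ℝ) (deg n)]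

/-! ### Coefficient identities -/

noncomputable def T (n : Fin 4 → ℕ) : ℝ :=
  ((deg n + 1).factorial : ℝ) / ∏ l, ((n l).factorial : ℝ)

noncomputable def kap0 : Coef := fun n => (-1) ^ (deg n + 1) * T n ^ 2

noncomputable def kap (j : Fin 4) : Coef := fun n =>
  2 * (-1) ^ (deg n + 1) * T n ^ 2 * (harmonicS1 (deg n + 1) - harmonicS1 (n j))

lemma prodfact_pos (n : Fin 4 → ℕ) : (0 : ℝ) < ∏ l, ((n l).factorial : ℝ) :=
  Finset.prod_pos fun l _ => by exact_mod_cast Nat.factorial_pos _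

lemma bananaA_eq (n : Fin 4 → ℕ) :
    bananaA n = (-1) ^ deg n * (((deg n).factorial : ℝ) / ∏ l, ((n l).factorial : ℝ)) ^ 2 := rfl

lemma bananaA_shf (i : Fin 4) (n : Fin 4 → ℕ) :
    bananaA (shf i n) = (-1) ^ (deg n + 1) * T n ^ 2 / ((n i : ℝ) + 1) ^ 2 := by
  have hprod : (∏ l, ((shf i n l).factorial : ℝ)) = ((n i : ℝ) + 1) * ∏ l, ((n l).factorial : ℝ) := by
    have := congrArg (fun m : ℕ => (m : ℝ)) (prod_factorial_shf i n)
    push_cast at this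
    simpa using this
  rw [bananaA_eq, deg_shf, hprod, T]
  have h1 : ((n i : ℝ) + 1) ≠ 0 := by positivity
  have h2 : (∏ l, ((n l).factorial : ℝ)) ≠ 0 := ne_of_gt (prodfact_pos n)
  field_simp

lemma Ec_c0 (i : Fin 4) (n : Fin 4 → ℕ) : Ec i bananaA n = kap0 n := by
  rw [Ec, bananaA_shf, kap0]
  have h1 : ((n i : ℝ) + 1) ≠ 0 := by positivity
  field_simp

lemma Dc_c0 (j : Fin 4) (n : Fin 4 → ℕ) :
    Dc j bananaA n = (-1) ^ (deg n + 1) * T n ^ 2 / ((n j : ℝ) + 1) := by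
  rw [Dc, bananaA_shf]
  have h1 : ((n j : ℝ) + 1) ≠ 0 := by positivity
  field_simp

lemma bananaAlog_eq (n : Fin 4 → ℕ) (j : Fin 4) :
    bananaAlog n j = 2 * bananaA n * (harmonicS1 (deg n) - harmonicS1 (n j)) := rfl

lemma Ec_c1_ne (i j : Fin 4) (hij : i ≠ j) (n : Fin 4 → ℕ) :
    Ec i (fun m => bananaAlog m j) n = kap j n := by
  rw [Ec, bananaAlog_eq, deg_shf, bananaA_shf]
  rw [shf_ne n (Ne.symm hij)]
  have h1 : ((n i : ℝ) + 1) ≠ 0 := by positivity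
  rw [kap, div_eq_mul_inv]
  have h2 : ((n i : ℝ) + 1) ^ 2 * (((n i : ℝ) + 1) ^ 2)⁻¹ = 1 := mul_inv_cancel₀ (by positivity)
  calc ((n i : ℝ) + 1) ^ 2 * (2 * ((-1) ^ (deg n + 1) * T n ^ 2 * (((n i : ℝ) + 1) ^ 2)⁻¹) *
        (harmonicS1 (deg n + 1) - harmonicS1 (n j)))
      = (((n i : ℝ) + 1) ^ 2 * (((n i : ℝ) + 1) ^ 2)⁻¹) * (2 * ((-1) ^ (deg n + 1) * T n ^ 2) *
        (harmonicS1 (deg n + 1) - harmonicS1 (n j))) := by ring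
    _ = 2 * (-1) ^ (deg n + 1) * T n ^ 2 * (harmonicS1 (deg n + 1) - harmonicS1 (n j)) := by
        rw [h2]; ring

lemma Ec_c1_eq (j : Fin 4) (n : Fin 4 → ℕ) :
    Ec j (fun m => bananaAlog m j) n + 2 * Dc j bananaA n = kap j n := by
  rw [Ec, bananaAlog_eq, deg_shf, bananaA_shf, Dc_c0, shf_self, harmonic_succ (n j), kap]
  have h1 : ((n j : ℝ) + 1) ≠ 0 := by positivity
  field_simp
  ring

/-! ### The box and summability of the coefficient series -/

def InBox (y : Fin 4 → ℝ) : Prop := ∀ l, 0 < y l ∧ y l < 1 / 16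

lemma exists_r {y : Fin 4 → ℝ} (hy : InBox y) : ∃ r : ℝ, 0 < r ∧ r < 1 / 16 ∧ ∀ l, y l ≤ r := by
  refine ⟨max (max (y 0) (y 1)) (max (y 2) (y 3)), ?_, ?_, ?_⟩
  · exact lt_of_lt_of_le (hy 0).1 ((le_max_left (y 0) (y 1)).trans (le_max_left _ _))
  · exact max_lt (max_lt (hy 0).2 (hy 1).2) (max_lt (hy 2).2 (hy 3).2)
  · intro l
    fin_cases l
    · exact (le_max_left (y 0) (y 1)).trans (le_max_left _ _)
    · exact (le_max_right (y 0) (y 1)).trans (le_max_left _ _)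
    · exact (le_max_left (y 2) (y 3)).trans (le_max_right _ _)
    · exact (le_max_right (y 2) (y 3)).trans (le_max_right _ _)

lemma abs_mono_le {y : Fin 4 → ℝ} {r : ℝ} {n : Fin 4 → ℕ} (hy : InBox y) (hr : ∀ l, y l ≤ r) :
    |mono y n| ≤ r ^ deg n := by
  have h0 : 0 ≤ mono y n := Finset.prod_nonneg fun l _ => pow_nonneg (hy l).1.le _
  rw [abs_of_nonneg h0, mono]
  calc ∏ l, y l ^ n l ≤ ∏ l, r ^ n l := by
        apply Finset.prod_le_prod (fun l _ => pow_nonneg (hy l).1.le _)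
        exact fun l _ => pow_le_pow_left₀ (hy l).1.le (hr l) _
    _ = r ^ deg n := by rw [Finset.prod_pow_eq_pow_sum]; rfl

lemma abs_Rest_le {y : Fin 4 → ℝ} {r : ℝ} {i : Fin 4} {n : Fin 4 → ℕ} (hy : InBox y)
    (hr : ∀ l, y l ≤ r) : |Rest i y n| ≤ r ^ (∑ l ∈ Finset.univ.erase i, n l) := by
  have h0 : 0 ≤ Rest i y n := Finset.prod_nonneg fun l _ => pow_nonneg (hy l).1.le _
  rw [abs_of_nonneg h0, Rest]
  calc ∏ l ∈ Finset.univ.erase i, y l ^ n l ≤ ∏ l ∈ Finset.univ.erase i, r ^ n l := by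
        apply Finset.prod_le_prod (fun l _ => pow_nonneg (hy l).1.le _)
        exact fun l _ => pow_le_pow_left₀ (hy l).1.le (hr l) _
    _ = r ^ (∑ l ∈ Finset.univ.erase i, n l) := by rw [Finset.prod_pow_eq_pow_sum]

lemma deg_eq (i : Fin 4) (n : Fin 4 → ℕ) : deg n = n i + ∑ l ∈ Finset.univ.erase i, n l := by
  rw [deg, ← Finset.add_sum_erase _ _ (Finset.mem_univ i)]

lemma Adm.summable_mono {d : ℕ} {c : Coef} (hc : Adm d c) {y : Fin 4 → ℝ} (hy : InBox y) :
    Summable fun n => c n * mono y n := by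
  obtain ⟨r, hr0, hr16, hler⟩ := exists_r hy
  obtain ⟨C, hC0, hC⟩ := hc
  apply key_summable (q := 16 * r) (C := C) (d := d) (by positivity) (by linarith)
  intro n
  rw [abs_mul]
  calc |c n| * |mono y n| ≤ C * ((deg n : ℝ) + 1) ^ d * 16 ^ deg n * r ^ deg n :=
        mul_le_mul (hC n) (abs_mono_le hy hler) (abs_nonneg _)
          (by positivity)
    _ = C * ((deg n : ℝ) + 1) ^ d * (16 * r) ^ deg n := by rw [mul_pow]; ring

lemma shf_update_pred {m : Fin 4 → ℕ} {i : Fin 4} (hm : m i ≠ 0) :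
    shf i (Function.update m i (m i - 1)) = m := by
  have h1 : Function.update m i (m i - 1) i = m i - 1 := Function.update_self ..
  unfold shf
  rw [h1, Function.update_idem]
  have h2 : m i - 1 + 1 = m i := by omega
  rw [h2, Function.update_eq_self]

/-! ### Termwise differentiation -/

lemma hasDerivAt_S {d : ℕ} {c : Coef} (hc : Adm d c) {y : Fin 4 → ℝ} (hy : InBox y) (i : Fin 4) :
    HasDerivAt (fun t => S c (Function.update y i t)) (S (Dc i c) y) (y i) := by
  classical
  obtain ⟨r, hr0, hr16, hler⟩ := exists_r hy
  obtain ⟨C, hC0, hC⟩ := id hc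
  set r' : ℝ := (r + 1 / 16) / 2 with hr'def
  have hrr' : r < r' := by rw [hr'def]; linarith
  have hr'16 : r' < 1 / 16 := by rw [hr'def]; linarith
  have hr'0 : 0 < r' := by linarith
  have hler' : ∀ l, y l ≤ r' := fun l => (hler l).trans hrr'.le
  have hmem : y i ∈ Set.Ioo (-r') r' :=
    ⟨by linarith [(hy i).1], lt_of_le_of_lt (hler i) hrr'⟩
  set g : (Fin 4 → ℕ) → ℝ → ℝ := fun n t => c n * (t ^ n i * Rest i y n) with hgdef
  set g' : (Fin 4 → ℕ) → ℝ → ℝ :=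
    fun n t => c n * (((n i : ℝ) * t ^ (n i - 1)) * Rest i y n) with hg'def
  set u : (Fin 4 → ℕ) → ℝ := fun n => |c n| * ((deg n : ℝ) * (r'⁻¹ * r' ^ deg n)) with hudef
  have hu : Summable u := by
    apply key_summable (q := 16 * r') (C := C * r'⁻¹) (d := d + 1) (by positivity) (by linarith)
    intro n
    have hun : 0 ≤ u n := by
      rw [hudef]
      positivity
    rw [abs_of_nonneg hun, hudef]
    calc |c n| * ((deg n : ℝ) * (r'⁻¹ * r' ^ deg n))
        ≤ (C * ((deg n : ℝ) + 1) ^ d * 16 ^ deg n) * (((deg n : ℝ) + 1) * (r'⁻¹ * r' ^ deg n)) := by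
          apply mul_le_mul (hC n) _ (by positivity) (by positivity)
          apply mul_le_mul_of_nonneg_right (by linarith) (by positivity)
      _ = C * r'⁻¹ * ((deg n : ℝ) + 1) ^ (d + 1) * (16 * r') ^ deg n := by
          rw [pow_succ, mul_pow]; ring
  have hgderiv : ∀ n t, t ∈ Set.Ioo (-r') r' → HasDerivAt (g n) (g' n t) t := fun n t _ =>
    ((hasDerivAt_pow (n i) t).mul_const (Rest i y n)).const_mul (c n)
  have hg'bound : ∀ n t, t ∈ Set.Ioo (-r') r' → ‖g' n t‖ ≤ u n := by
    intro n t ht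
    have htr : |t| ≤ r' := (abs_lt.2 ⟨ht.1, ht.2⟩).le
    by_cases hni : n i = 0
    · have : g' n t = 0 := by rw [hg'def]; simp [hni]
      rw [this, norm_zero, hudef]
      positivity
    · have hdegn : deg n = (n i - 1) + (∑ l ∈ Finset.univ.erase i, n l) + 1 := by
        rw [deg_eq i n]; omega
      have habs : ‖g' n t‖ = |c n| * (((n i : ℝ)) * |t| ^ (n i - 1) * |Rest i y n|) := by
        rw [hg'def]
        simp only [Real.norm_eq_abs, abs_mul, abs_pow, Nat.abs_cast]
      rw [habs, hudef]
      have h1 : ((n i : ℝ)) ≤ (deg n : ℝ) := by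
        exact_mod_cast Finset.single_le_sum (f := n) (fun _ _ => Nat.zero_le _) (Finset.mem_univ i)
      have h2 : |t| ^ (n i - 1) ≤ r' ^ (n i - 1) := pow_le_pow_left₀ (abs_nonneg t) htr _
      have h3 : |Rest i y n| ≤ r' ^ (∑ l ∈ Finset.univ.erase i, n l) := abs_Rest_le hy hler'
      have h4 : r' ^ (n i - 1) * r' ^ (∑ l ∈ Finset.univ.erase i, n l) = r'⁻¹ * r' ^ deg n := by
        rw [← pow_add, hdegn, pow_succ]
        field_simp
      calc |c n| * (((n i : ℝ)) * |t| ^ (n i - 1) * |Rest i y n|)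
          ≤ |c n| * (((deg n : ℝ)) * (r' ^ (n i - 1) * r' ^ (∑ l ∈ Finset.univ.erase i, n l))) := by
            apply mul_le_mul_of_nonneg_left _ (abs_nonneg _)
            calc ((n i : ℝ)) * |t| ^ (n i - 1) * |Rest i y n|
                ≤ ((deg n : ℝ)) * r' ^ (n i - 1) * r' ^ (∑ l ∈ Finset.univ.erase i, n l) := by
                  apply mul_le_mul (mul_le_mul h1 h2 (by positivity) (by positivity)) h3
                    (abs_nonneg _) (by positivity)
              _ = ((deg n : ℝ)) * (r' ^ (n i - 1) * r' ^ (∑ l ∈ Finset.univ.erase i, n l)) := by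
                  ring
        _ = |c n| * ((deg n : ℝ) * (r'⁻¹ * r' ^ deg n)) := by rw [h4]
  have hg0 : Summable fun n => g n (y i) := by
    refine (hc.summable_mono hy).congr fun n => ?_
    show c n * mono y n = c n * (y i ^ n i * Rest i y n)
    rw [mono_eq y i n]
  have main := hasDerivAt_tsum_of_isPreconnected hu isOpen_Ioo isPreconnected_Ioo
    hgderiv hg'bound hmem hg0 hmem
  have funeq : (fun t => ∑' n, g n t) = fun t => S c (Function.update y i t) := by
    funext t
    exact (tsum_congr fun n => by rw [hgdef, mono_update]).symm
  have hval : ∑' n, g' n (y i) = S (Dc i c) y := by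
    have hsupp : Function.support (fun m => g' m (y i)) ⊆ Set.range (shf i) := by
      intro m hm
      by_cases hmi : m i = 0
      · exfalso
        apply hm
        rw [hg'def]
        simp [hmi]
      · exact ⟨Function.update m i (m i - 1), shf_update_pred hmi⟩
    rw [← (shf_inj i).tsum_eq hsupp, S]
    apply tsum_congr fun n => ?_
    show c (shf i n) * (((shf i n i : ℕ) : ℝ) * (y i) ^ (shf i n i - 1) * Rest i y (shf i n))
        = Dc i c n * mono y n
    rw [shf_self, Rest_shf, Nat.add_sub_cancel, Dc, mono_eq y i n]
    push_cast
    ring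
  rw [funeq] at main
  rwa [hval] at main

/-! ### The second-order combination -/

noncomputable def pdc (i : Fin 4) (c : Coef) : Coef := fun m =>
  if m i = 0 then 0 else Dc i (Dc i c) (Function.update m i (m i - 1))

lemma pdc_shf (i : Fin 4) (c : Coef) (n : Fin 4 → ℕ) :
    pdc i c (shf i n) = Dc i (Dc i c) n := by
  simp only [pdc, shf_self]
  rw [if_neg (Nat.succ_ne_zero _), Nat.add_sub_cancel, update_shf_pred]

lemma deg_update (m : Fin 4 → ℕ) (i : Fin 4) (v : ℕ) :
    deg (Function.update m i v) = v + ∑ l ∈ Finset.univ.erase i, m l := by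
  unfold deg
  rw [Finset.sum_update_of_mem (Finset.mem_univ i), Finset.erase_eq]

lemma adm_pdc {d : ℕ} {c : Coef} (hc : Adm d c) (i : Fin 4) : Adm (d + 2) (pdc i c) := by
  obtain ⟨C, hC0, hC⟩ := (hc.dc i).dc i
  refine ⟨C, hC0, fun m => ?_⟩
  by_cases hm : m i = 0
  · simp only [pdc, if_pos hm, abs_zero]
    positivity
  · simp only [pdc, if_neg hm]
    have hdle : deg (Function.update m i (m i - 1)) ≤ deg m := by
      rw [deg_update, deg_eq i m]
      omega
    calc |Dc i (Dc i c) (Function.update m i (m i - 1))|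
        ≤ C * ((deg (Function.update m i (m i - 1)) : ℝ) + 1) ^ (d + 1 + 1)
            * 16 ^ deg (Function.update m i (m i - 1)) := hC _
      _ ≤ C * ((deg m : ℝ) + 1) ^ (d + 2) * 16 ^ deg m := by
          have hcast : ((deg (Function.update m i (m i - 1)) : ℝ)) ≤ (deg m : ℝ) := by
            exact_mod_cast hdle
          have h2 : ((deg (Function.update m i (m i - 1)) : ℝ) + 1) ^ (d + 1 + 1)
              ≤ ((deg m : ℝ) + 1) ^ (d + 2) := by
            show _ ^ (d + 2) ≤ _
            exact pow_le_pow_left₀ (by positivity) (by linarith) _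
          have h3 : (16 : ℝ) ^ deg (Function.update m i (m i - 1)) ≤ 16 ^ deg m :=
            pow_le_pow_right₀ (by norm_num) hdle
          calc C * ((deg (Function.update m i (m i - 1)) : ℝ) + 1) ^ (d + 1 + 1)
                * 16 ^ deg (Function.update m i (m i - 1))
              ≤ C * ((deg m : ℝ) + 1) ^ (d + 2) * 16 ^ deg m := by
                apply mul_le_mul (mul_le_mul_of_nonneg_left h2 hC0) h3 (by positivity)
                  (by positivity)

lemma pdc_add (i : Fin 4) (c : Coef) (m : Fin 4 → ℕ) :
    Dc i c m + pdc i c m = Ec i c m := by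
  by_cases hm : m i = 0
  · simp only [pdc, Dc, Ec, if_pos hm, hm]
    push_cast
    ring
  · have hm' : m = shf i (Function.update m i (m i - 1)) := (shf_update_pred hm).symm
    set n := Function.update m i (m i - 1) with hn
    rw [hm', pdc_shf]
    simp only [Dc, Ec, shf_self]
    push_cast
    ring

lemma S_Ec {d : ℕ} {c : Coef} (hc : Adm d c) {y : Fin 4 → ℝ} (hy : InBox y) (i : Fin 4) :
    y i * S (Dc i (Dc i c)) y + S (Dc i c) y = S (Ec i c) y := by
  classical
  have hsum_pdc : Summable fun m => pdc i c m * mono y m := (adm_pdc hc i).summable_mono hy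
  have hsum_dc : Summable fun m => Dc i c m * mono y m := ((hc.dc i).summable_mono hy)
  have h1 : y i * S (Dc i (Dc i c)) y = ∑' m, pdc i c m * mono y m := by
    rw [S, ← tsum_mul_left]
    have hsupp : Function.support (fun m => pdc i c m * mono y m) ⊆ Set.range (shf i) := by
      intro m hm
      by_cases hmi : m i = 0
      · exfalso
        apply hm
        simp only [pdc, if_pos hmi, zero_mul]
      · exact ⟨Function.update m i (m i - 1), shf_update_pred hmi⟩
    rw [← (shf_inj i).tsum_eq hsupp]
    exact tsum_congr fun n => by rw [pdc_shf, mono_shf]; ring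
  rw [h1, S, S, ← Summable.tsum_add hsum_pdc hsum_dc]
  exact tsum_congr fun n => by rw [← pdc_add]; ring

/-! ### Derivatives of the logarithmic period -/

noncomputable def c1 (j : Fin 4) : Coef := fun n => bananaAlog n j

lemma adm_c1' (j : Fin 4) : Adm 1 (c1 j) := adm_c1 j

lemma inBox_update {y : Fin 4 → ℝ} {i : Fin 4} (hy : InBox y) {t : ℝ}
    (ht : t ∈ Set.Ioo (0 : ℝ) (1 / 16)) : InBox (Function.update y i t) := by
  intro l
  by_cases hl : l = i
  · subst hl
    rw [Function.update_self]
    exact ⟨ht.1, ht.2⟩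
  · rw [Function.update_of_ne hl]
    exact hy l

lemma pderiv_phi1 (j i : Fin 4) {y : Fin 4 → ℝ} (hy : InBox y) :
    HasDerivAt (fun t => phi1 j (Function.update y i t))
      (S (Dc i (c1 j)) y + S (Dc i bananaA) y * Real.log (y j)
        + (if i = j then S bananaA y / y j else 0)) (y i) := by
  have h1 := hasDerivAt_S (adm_c1' j) hy i
  have h2 := hasDerivAt_S adm_c0 hy i
  by_cases hij : i = j
  · subst hij
    rw [if_pos rfl]
    have hlog := Real.hasDerivAt_log (ne_of_gt (hy i).1)
    have h4 := h1.add (h2.mul hlog)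
    have hfun : (fun t => phi1 i (Function.update y i t))
        = fun t => S (c1 i) (Function.update y i t)
            + S bananaA (Function.update y i t) * Real.log t := by
      funext t
      show phi1 i (Function.update y i t) = _
      rw [show phi1 i (Function.update y i t) = S (c1 i) (Function.update y i t)
          + S bananaA (Function.update y i t) * Real.log (Function.update y i t i) from rfl,
        Function.update_self]
    rw [hfun]
    refine h4.congr_deriv ?_
    rw [Function.update_eq_self]
    field_simp
    ring
  · rw [if_neg hij]
    have h3 := h1.add (h2.mul_const (Real.log (y j)))
    have hfun : (fun t => phi1 j (Function.update y i t))
        = fun t => S (c1 j) (Function.update y i t)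
            + S bananaA (Function.update y i t) * Real.log (y j) := by
      funext t
      show phi1 j (Function.update y i t) = _
      rw [show phi1 j (Function.update y i t) = S (c1 j) (Function.update y i t)
          + S bananaA (Function.update y i t) * Real.log (Function.update y i t j) from rfl,
        Function.update_of_ne (Ne.symm hij)]
    rw [hfun, add_zero]
    exact h3

lemma pderiv_phi1_eq (j i : Fin 4) {y : Fin 4 → ℝ} (hy : InBox y) :
    pderiv i (phi1 j) y = S (Dc i (c1 j)) y + S (Dc i bananaA) y * Real.log (y j)
        + (if i = j then S bananaA y / y j else 0) := by
  simp only [pderiv]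
  exact (pderiv_phi1 j i hy).deriv

lemma S_kap0 {y : Fin 4 → ℝ} (i : Fin 4) : S (Ec i bananaA) y = S kap0 y :=
  tsum_congr fun n => by rw [Ec_c0]

lemma S_kap_ne {y : Fin 4 → ℝ} {i j : Fin 4} (hij : i ≠ j) :
    S (Ec i (c1 j)) y = S (kap j) y :=
  tsum_congr fun n => by rw [show Ec i (c1 j) n = kap j n from Ec_c1_ne i j hij n]

lemma S_kap_eq {y : Fin 4 → ℝ} (hy : InBox y) (j : Fin 4) :
    S (Ec j (c1 j)) y + 2 * S (Dc j bananaA) y = S (kap j) y := by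
  have hsum1 : Summable fun n => Ec j (c1 j) n * mono y n :=
    ((adm_c1' j).ec j).summable_mono hy
  have hsum2 : Summable fun n => 2 * (Dc j bananaA n * mono y n) :=
    ((adm_c0.dc j).summable_mono hy).mul_left 2
  rw [S, S, ← tsum_mul_left, ← Summable.tsum_add hsum1 hsum2]
  exact tsum_congr fun n => by
    rw [show Ec j (c1 j) n * mono y n + 2 * (Dc j bananaA n * mono y n)
        = (Ec j (c1 j) n + 2 * Dc j bananaA n) * mono y n from by ring,
      show Ec j (c1 j) n + 2 * Dc j bananaA n = kap j n from Ec_c1_eq j n]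

lemma main_aux (j i : Fin 4) {y : Fin 4 → ℝ} (hy : InBox y) :
    y i * pderiv i (pderiv i (phi1 j)) y + pderiv i (phi1 j) y
      = S (kap j) y + S kap0 y * Real.log (y j) := by
  have hIoo : Set.Ioo (0 : ℝ) (1 / 16) ∈ nhds (y i) :=
    isOpen_Ioo.mem_nhds ⟨(hy i).1, (hy i).2⟩
  have hyne : y i ≠ 0 := ne_of_gt (hy i).1
  have hE1 := S_Ec (adm_c1' j) hy i
  have hE0 := S_Ec adm_c0 hy i
  by_cases hij : i = j
  · subst hij
    have h1 := hasDerivAt_S ((adm_c1' i).dc i) hy i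
    have h2 := (hasDerivAt_S (adm_c0.dc i) hy i).mul (Real.hasDerivAt_log hyne)
    have h3 := (hasDerivAt_S adm_c0 hy i).div (hasDerivAt_id' (x := y i)) hyne
    have hg := (h1.add h2).add h3
    have heq : (fun t => pderiv i (phi1 i) (Function.update y i t))
        =ᶠ[nhds (y i)] (fun t => S (Dc i (c1 i)) (Function.update y i t)
          + S (Dc i bananaA) (Function.update y i t) * Real.log t
          + S bananaA (Function.update y i t) / t) := by
      refine Filter.eventuallyEq_of_mem hIoo fun t ht => ?_
      have hbox := inBox_update hy (i := i) ht
      rw [pderiv_phi1_eq i i hbox, if_pos rfl, Function.update_self]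
    have hd := (hg.congr_of_eventuallyEq heq).deriv
    have hsecond : pderiv i (pderiv i (phi1 i)) y
        = S (Dc i (Dc i (c1 i))) y + (S (Dc i (Dc i bananaA)) y * Real.log (y i)
            + S (Dc i bananaA) y * (y i)⁻¹)
          + (S (Dc i bananaA) y * (y i) - S bananaA y * 1) / (y i) ^ 2 := by
      rw [show pderiv i (pderiv i (phi1 i)) y
          = deriv (fun t => pderiv i (phi1 i) (Function.update y i t)) (y i) from rfl, hd]
      simp only [Function.update_eq_self]
    rw [hsecond, pderiv_phi1_eq i i hy, if_pos rfl]
    rw [← S_kap_eq hy i, ← S_kap0 i, ← hE1, ← hE0]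
    field_simp
    ring
  · have h1 := hasDerivAt_S ((adm_c1' j).dc i) hy i
    have h2 := (hasDerivAt_S (adm_c0.dc i) hy i).mul_const (Real.log (y j))
    have hg := h1.add h2
    have heq : (fun t => pderiv i (phi1 j) (Function.update y i t))
        =ᶠ[nhds (y i)] (fun t => S (Dc i (c1 j)) (Function.update y i t)
          + S (Dc i bananaA) (Function.update y i t) * Real.log (y j)) := by
      refine Filter.eventuallyEq_of_mem hIoo fun t ht => ?_
      have hbox := inBox_update hy (i := i) ht
      rw [pderiv_phi1_eq j i hbox, if_neg hij, Function.update_of_ne (Ne.symm hij), add_zero]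
    have hd := (hg.congr_of_eventuallyEq heq).deriv
    have hsecond : pderiv i (pderiv i (phi1 j)) y
        = S (Dc i (Dc i (c1 j))) y + S (Dc i (Dc i bananaA)) y * Real.log (y j) := by
      rw [show pderiv i (pderiv i (phi1 j)) y
          = deriv (fun t => pderiv i (phi1 j) (Function.update y i t)) (y i) from rfl, hd]
    rw [hsecond, pderiv_phi1_eq j i hy, if_neg hij]
    rw [← S_kap_ne hij, ← S_kap0 i, ← hE1, ← hE0]
    ring

end BananaAux

/-- The single-logarithmic periods satisfy the symmetric second-order Picard–Fuchs
relations: for `y` in the open box `(0, 1/16)⁴` and all `i, k`,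
`yᵢ ∂²φ_j/∂yᵢ² + ∂φ_j/∂yᵢ = y_k ∂²φ_j/∂y_k² + ∂φ_j/∂y_k`. -/
theorem phi1_picardFuchs_symmetric (j : Fin 4) (y : Fin 4 → ℝ)
    (hy : ∀ i, 0 < y i ∧ y i < 1 / 16) (i k : Fin 4) :
    y i * pderiv i (pderiv i (phi1 j)) y + pderiv i (phi1 j) y
      = y k * pderiv k (pderiv k (phi1 j)) y + pderiv k (phi1 j) y := by
  have hbox : BananaAux.InBox y := hy
  rw [BananaAux.main_aux j i hbox, BananaAux.main_aux j k hbox]
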